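/- Let d, k ≥ 1 be integers, let G = (V, E) be a d-uniform hypergraph, and let W be a hitting set of G with |W| ≤ k. Let C ⊆ V with |C| ≤ d − 1 be such that s_G(C') ≤ k for every proper subset C' ⊊ C. Then there exists a set A ⊆ V with A ∩ C = ∅ and |A| ≤ k + 2^d · d · k such that every edge of E that is disjoint from A contains C. -/

import Mathlib

/-!
For every proper subset `C'` of `C` fix a sunflower with core `C'` of maximum size; by hypothesis
it has at most `k` petals, each of at most `d` vertices. Let `A` be the union of all these petals
with `C` removed, so `|A| ≤ 2 ^ |C| · d · k`. If an edge `D` is disjoint from `A` but misses a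
vertex of `C`, put `C' = D ∩ C ⊂ C`. Since `D` avoids every petal outside `C`, it meets each petal
of the sunflower for `C'` exactly in `C'`, so by maximality `D` is itself a petal. Then `D \ C ⊆ A`
forces `D ⊂ C`, which is impossible when `|C| ≤ |D|`.
-/

open scoped Classical

/-- The minimum size of a hitting set of the family `F`: a finite set of
vertices intersecting every member of `F`. -/
noncomputable def hsNum {α : Type*} (F : Finset (Finset α)) : ℕ :=
  sInf {n | ∃ H : Finset α, (∀ D ∈ F, ∃ v ∈ H, v ∈ D) ∧ H.card = n}

/-- `T` is a sunflower with core `C` in the hypergraph with edge set `E`: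
a set of edges, each containing `C`, whose pairwise intersections equal `C`. -/
def IsSunflower {α : Type*} [DecidableEq α] (E : Finset (Finset α)) (C : Finset α)
    (T : Finset (Finset α)) : Prop :=
  T ⊆ E ∧ (∀ D ∈ T, C ⊆ D) ∧ ∀ D ∈ T, ∀ D' ∈ T, D ≠ D' → D ∩ D' = C

/-- `sunflowerNum E C` is the maximum number of petals of a sunflower with
core `C` in the hypergraph with edge set `E` (it is `0` if no edge contains `C`). -/
noncomputable def sunflowerNum {α : Type*} [DecidableEq α] (E : Finset (Finset α))
    (C : Finset α) : ℕ :=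
  sSup {n | ∃ T : Finset (Finset α), IsSunflower E C T ∧ T.card = n}

namespace IsSunflower

variable {α : Type*} [DecidableEq α] {E T : Finset (Finset α)} {C D : Finset α}

lemma empty (E : Finset (Finset α)) (C : Finset α) : IsSunflower E C ∅ :=
  ⟨Finset.empty_subset _, by simp, by simp⟩

lemma insert (hT : IsSunflower E C T) (hD : D ∈ E) (hCD : C ⊆ D)
    (hinter : ∀ P ∈ T, D ∩ P = C) : IsSunflower E C (insert D T) := by
  obtain ⟨hTE, hcore, hpair⟩ := hT
  refine ⟨Finset.insert_subset hD hTE, ?_, ?_⟩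
  · simpa [hCD] using hcore
  · intro X hX Y hY hXY
    rcases Finset.mem_insert.mp hX with rfl | hX' <;> rcases Finset.mem_insert.mp hY with rfl | hY'
    · exact absurd rfl hXY
    · exact hinter Y hY'
    · rw [Finset.inter_comm]; exact hinter X hX'
    · exact hpair X hX' Y hY' hXY

end IsSunflower

section Sunflowers

variable {α : Type*} [DecidableEq α]

lemma bddAbove_sunflower_cards (E : Finset (Finset α)) (C : Finset α) :
    BddAbove {n | ∃ T : Finset (Finset α), IsSunflower E C T ∧ T.card = n} := by
  refine ⟨E.card, ?_⟩
  rintro n ⟨T, ⟨hTE, -, -⟩, rfl⟩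
  exact Finset.card_le_card hTE

lemma IsSunflower.card_le_sunflowerNum {E T : Finset (Finset α)} {C : Finset α}
    (hT : IsSunflower E C T) : T.card ≤ sunflowerNum E C := by
  unfold sunflowerNum
  exact le_csSup (bddAbove_sunflower_cards E C) ⟨T, hT, rfl⟩

lemma exists_isSunflower_card_eq_sunflowerNum (E : Finset (Finset α)) (C : Finset α) :
    ∃ T, IsSunflower E C T ∧ T.card = sunflowerNum E C :=
  Nat.sSup_mem (s := {n | ∃ T : Finset (Finset α), IsSunflower E C T ∧ T.card = n})
    ⟨0, ∅, IsSunflower.empty E C, rfl⟩ (bddAbove_sunflower_cards E C)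

noncomputable def maxSunflower (E : Finset (Finset α)) (C : Finset α) : Finset (Finset α) :=
  (exists_isSunflower_card_eq_sunflowerNum E C).choose

lemma isSunflower_maxSunflower (E : Finset (Finset α)) (C : Finset α) :
    IsSunflower E C (maxSunflower E C) :=
  (exists_isSunflower_card_eq_sunflowerNum E C).choose_spec.1

lemma card_maxSunflower (E : Finset (Finset α)) (C : Finset α) :
    (maxSunflower E C).card = sunflowerNum E C :=
  (exists_isSunflower_card_eq_sunflowerNum E C).choose_spec.2

lemma mem_maxSunflower_of_inter_eq {E : Finset (Finset α)} {C D : Finset α} (hD : D ∈ E)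
    (hCD : C ⊆ D) (hinter : ∀ P ∈ maxSunflower E C, D ∩ P = C) : D ∈ maxSunflower E C := by
  by_contra hDT
  have hins := ((isSunflower_maxSunflower E C).insert hD hCD hinter).card_le_sunflowerNum
  rw [Finset.card_insert_of_notMem hDT, card_maxSunflower] at hins
  omega

noncomputable def ssubsetPetals (E : Finset (Finset α)) (C : Finset α) : Finset α :=
  C.ssubsets.biUnion fun C' => (maxSunflower E C').biUnion (· \ C)

lemma mem_ssubsetPetals {E : Finset (Finset α)} {C C' P : Finset α} {v : α} (hC' : C' ⊂ C)
    (hP : P ∈ maxSunflower E C') (hvP : v ∈ P) (hvC : v ∉ C) : v ∈ ssubsetPetals E C :=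
  Finset.mem_biUnion.mpr ⟨C', Finset.mem_ssubsets.mpr hC',
    Finset.mem_biUnion.mpr ⟨P, hP, Finset.mem_sdiff.mpr ⟨hvP, hvC⟩⟩⟩

lemma disjoint_ssubsetPetals (E : Finset (Finset α)) (C : Finset α) :
    Disjoint (ssubsetPetals E C) C := by
  simp only [ssubsetPetals, Finset.disjoint_biUnion_left]
  exact fun _ _ _ _ => Finset.sdiff_disjoint

lemma card_ssubsetPetals_le {E : Finset (Finset α)} {C : Finset α} {d k : ℕ}
    (hcard : ∀ D ∈ E, D.card ≤ d) (hsub : ∀ C' ⊂ C, sunflowerNum E C' ≤ k) :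
    (ssubsetPetals E C).card ≤ 2 ^ C.card * (d * k) := by
  have hpetals : ∀ C' ∈ C.ssubsets, ((maxSunflower E C').biUnion (· \ C)).card ≤ d * k := by
    intro C' hC'
    calc ((maxSunflower E C').biUnion (· \ C)).card ≤ (maxSunflower E C').card * d :=
          Finset.card_biUnion_le_card_mul _ _ _ fun P hP =>
            (Finset.card_le_card Finset.sdiff_subset).trans
              (hcard P ((isSunflower_maxSunflower E C').1 hP))
      _ ≤ k * d := by
          rw [card_maxSunflower]
          exact Nat.mul_le_mul_right d (hsub C' (Finset.mem_ssubsets.mp hC'))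
      _ = d * k := Nat.mul_comm k d
  calc (ssubsetPetals E C).card ≤ C.ssubsets.card * (d * k) :=
        Finset.card_biUnion_le_card_mul _ _ _ hpetals
    _ ≤ 2 ^ C.card * (d * k) := by
        rw [← Finset.card_powerset C]
        exact Nat.mul_le_mul_right _ (Finset.card_le_card (Finset.erase_subset _ _))

lemma subset_of_disjoint_ssubsetPetals {E : Finset (Finset α)} {C D : Finset α} (hD : D ∈ E)
    (hcard : C.card ≤ D.card) (hdisj : Disjoint (ssubsetPetals E C) D) : C ⊆ D := by
  by_contra hnot
  have hcore : D ∩ C ⊂ C :=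
    ⟨Finset.inter_subset_right, fun h => hnot fun _ hx => (Finset.mem_inter.mp (h hx)).1⟩
  have houtside : ∀ P ∈ maxSunflower E (D ∩ C), ∀ v ∈ D, v ∈ P → v ∈ C := fun P hP v hvD hvP =>
    by_contra fun hvC => Finset.disjoint_left.mp hdisj (mem_ssubsetPetals hcore hP hvP hvC) hvD
  have hinter : ∀ P ∈ maxSunflower E (D ∩ C), D ∩ P = D ∩ C := by
    intro P hP
    refine Finset.Subset.antisymm (fun v hv => ?_)
      (Finset.subset_inter Finset.inter_subset_left
        ((isSunflower_maxSunflower E _).2.1 P hP))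
    obtain ⟨hvD, hvP⟩ := Finset.mem_inter.mp hv
    exact Finset.mem_inter.mpr ⟨hvD, houtside P hP v hvD hvP⟩
  have hDmem := mem_maxSunflower_of_inter_eq hD Finset.inter_subset_left hinter
  have hDC : D ⊂ C := ⟨fun v hv => houtside D hDmem v hv hv, hnot⟩
  exact (Finset.card_lt_card hDC).not_ge hcard

end Sunflowers

theorem stmt_11_general {α : Type*} [DecidableEq α] (d k : ℕ)
    (E : Finset (Finset α)) (huni : ∀ D ∈ E, D.card = d)
    (C : Finset α) (hC : C.card ≤ d - 1)
    (hsub : ∀ C' ⊂ C, sunflowerNum E C' ≤ k) :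
    ∃ A : Finset α, Disjoint A C ∧ A.card ≤ k + 2 ^ d * d * k ∧
      ∀ D ∈ E, Disjoint A D → C ⊆ D := by
  have hCd : C.card ≤ d := hC.trans (Nat.sub_le d 1)
  refine ⟨ssubsetPetals E C, disjoint_ssubsetPetals E C, ?_, fun D hD hdisj =>
    subset_of_disjoint_ssubsetPetals hD (huni D hD ▸ hCd) hdisj⟩
  calc (ssubsetPetals E C).card ≤ 2 ^ C.card * (d * k) :=
        card_ssubsetPetals_le (fun D hD => (huni D hD).le) hsub
    _ ≤ 2 ^ d * d * k := by
        rw [mul_assoc]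
        exact Nat.mul_le_mul_right _ (Nat.pow_le_pow_right two_pos hCd)
    _ ≤ k + 2 ^ d * d * k := Nat.le_add_left _ k

theorem stmt_11 {α : Type*} [DecidableEq α] (d k : ℕ)
    (hd : 1 ≤ d) (hk : 1 ≤ k)
    (E : Finset (Finset α)) (huni : ∀ D ∈ E, D.card = d)
    (W : Finset α) (hW : ∀ D ∈ E, ∃ v ∈ W, v ∈ D) (hWcard : W.card ≤ k)
    (C : Finset α) (hC : C.card ≤ d - 1)
    (hsub : ∀ C' ⊂ C, sunflowerNum E C' ≤ k) :
    ∃ A : Finset α, Disjoint A C ∧ A.card ≤ k + 2 ^ d * d * k ∧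
      ∀ D ∈ E, Disjoint A D → C ⊆ D :=
  stmt_11_general d k E huni C hC hsub
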